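/- Let V be a vector space over ℚ, let n be a natural number, and let f : ℤⁿ → V be an additive group homomorphism whose kernel is a free abelian group of rank ρ (equivalently, whose kernel has ℤ-rank ρ). Then the torsion subgroup of the quotient abelian group V/f(ℤⁿ) is isomorphic, as an abelian group, to (ℚ/ℤ)^{n−ρ}. -/

import Mathlib

/-!
The image `L = f(ℤⁿ)` is a free abelian group of rank `n - ρ` by rank-nullity. Since `V` is a
`ℚ`-vector space, a `ℤ`-basis `b` of `L` stays `ℚ`-linearly independent, so the map
`ℚ^{n-ρ} → V ⧸ L`, `c ↦ ∑ cᵢ bᵢ mod L` has kernel exactly `ℤ^{n-ρ}`. Its image is the torsion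
subgroup: `cᵢ bᵢ` is killed by the denominator of `cᵢ`, and if `k • v ∈ L` then `v` has coordinates
`(1/k) • b.repr (k • v)`. Hence the torsion subgroup is `ℚ^{n-ρ} / ℤ^{n-ρ} ≅ (ℚ/ℤ)^{n-ρ}`.
-/

open Module

noncomputable def QuotientAddGroup.quotientPi {ι : Type*} {G : ι → Type*}
    [∀ i, AddCommGroup (G i)] (H : ∀ i, AddSubgroup (G i)) :
    ((∀ i, G i) ⧸ AddSubgroup.pi Set.univ H) ≃+ ∀ i, G i ⧸ H i :=
  (quotientAddEquivOfEq (by ext; simp [AddSubgroup.mem_pi, funext_iff])).trans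
    (quotientKerEquivOfSurjective (AddMonoidHom.piMap fun i => mk' (H i))
      (Function.Surjective.piMap fun i => mk_surjective))

theorem QuotientAddGroup.mk_mem_torsion_iff {G : Type*} [AddCommGroup G] (H : AddSubgroup G)
    (g : G) : (g : G ⧸ H) ∈ AddCommGroup.torsion (G ⧸ H) ↔ ∃ k : ℕ, 0 < k ∧ k • g ∈ H := by
  simp only [AddCommGroup.mem_torsion, isOfFinAddOrder_iff_nsmul_eq_zero, ← mk_nsmul,
    eq_zero_iff]

namespace Module.Basis

variable {V ι : Type*} [AddCommGroup V] [Module ℚ V] {L : AddSubgroup V} (b : Basis ι ℤ L)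

theorem linearIndependent_rat : LinearIndependent ℚ fun i => (b i : V) :=
  (LinearIndependent.iff_fractionRing ℤ ℚ).mp (b.linearIndependent.map' L.subtype.toIntLinearMap
    (LinearMap.ker_eq_bot.mpr Subtype.val_injective))

variable [Fintype ι]

theorem coe_eq_sum_rat_smul (x : L) : (x : V) = ∑ i, (b.repr x i : ℚ) • (b i : V) := by
  nth_rw 1 [← b.sum_repr x]
  simp only [AddSubgroup.val_finsetSum, AddSubgroup.coe_zsmul, Int.cast_smul_eq_zsmul]

theorem sum_rat_smul_mem_iff (c : ι → ℚ) :
    ∑ i, c i • (b i : V) ∈ L ↔ ∀ i, c i ∈ AddSubgroup.zmultiples (1 : ℚ) := by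
  simp only [AddSubgroup.mem_zmultiples_iff, zsmul_one]
  constructor
  · intro hc i
    refine ⟨b.repr ⟨_, hc⟩ i, ?_⟩
    exact (Fintype.linearIndependent_iffₛ.mp b.linearIndependent_rat _ _
      (b.coe_eq_sum_rat_smul ⟨_, hc⟩).symm i)
  · intro hc
    choose m hm using hc
    have hx := b.coe_eq_sum_rat_smul (b.equivFun.symm m)
    simp only [← b.equivFun_apply, LinearEquiv.apply_symm_apply, hm] at hx
    exact hx ▸ (b.equivFun.symm m).2

noncomputable def ratCombinationMod : (ι → ℚ) →+ V ⧸ L :=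
  (QuotientAddGroup.mk' L).comp (Fintype.linearCombination ℚ fun i => (b i : V)).toAddMonoidHom

theorem ratCombinationMod_apply (c : ι → ℚ) :
    b.ratCombinationMod c = ((∑ i, c i • (b i : V) : V) : V ⧸ L) := by
  simp [ratCombinationMod, Fintype.linearCombination_apply]

theorem ker_ratCombinationMod :
    b.ratCombinationMod.ker = AddSubgroup.pi Set.univ fun _ => AddSubgroup.zmultiples 1 := by
  ext c
  simp only [AddMonoidHom.mem_ker, ratCombinationMod_apply, QuotientAddGroup.eq_zero_iff,
    sum_rat_smul_mem_iff, AddSubgroup.mem_pi, Set.mem_univ, true_implies]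

theorem range_ratCombinationMod : b.ratCombinationMod.range = AddCommGroup.torsion (V ⧸ L) := by
  apply le_antisymm
  · rintro _ ⟨c, rfl⟩
    rw [ratCombinationMod_apply, QuotientAddGroup.mk_sum]
    refine AddSubgroup.sum_mem _ fun i _ => (QuotientAddGroup.mk_mem_torsion_iff _ _).mpr
      ⟨(c i).den, (c i).den_pos, ?_⟩
    rw [← Nat.cast_smul_eq_nsmul ℚ, smul_smul, Rat.den_mul_eq_num, Int.cast_smul_eq_zsmul]
    exact L.zsmul_mem (b i).2 _
  · intro y hy
    obtain ⟨v, rfl⟩ := QuotientAddGroup.mk_surjective y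
    obtain ⟨k, hk, hkv⟩ := (QuotientAddGroup.mk_mem_torsion_iff _ _).mp hy
    refine ⟨fun i => (k : ℚ)⁻¹ * b.repr ⟨_, hkv⟩ i, ?_⟩
    simp only [ratCombinationMod_apply, mul_smul, ← Finset.smul_sum, ← b.coe_eq_sum_rat_smul,
      ← Nat.cast_smul_eq_nsmul ℚ]
    rw [inv_smul_smul₀ (Nat.cast_ne_zero.mpr hk.ne')]

noncomputable def torsionQuotientAddEquiv :
    AddCommGroup.torsion (V ⧸ L) ≃+ (ι → ℚ ⧸ AddSubgroup.zmultiples (1 : ℚ)) :=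
  (AddEquiv.addSubgroupCongr b.range_ratCombinationMod.symm).trans <|
    (QuotientAddGroup.quotientKerEquivRange _).symm.trans <|
      (QuotientAddGroup.quotientAddEquivOfEq b.ker_ratCombinationMod).trans <|
        QuotientAddGroup.quotientPi _

end Module.Basis

theorem AddMonoidHom.finrank_range_add_finrank_ker {M N : Type*} [AddCommGroup M]
    [AddCommGroup N] [Module.Finite ℤ M] (f : M →+ N) :
    finrank ℤ f.range + finrank ℤ f.ker = finrank ℤ M := by
  have := LinearMap.lift_rank_range_add_rank_ker f.toIntLinearMap
  rw [← finrank_eq_rank ℤ M, ← finrank_eq_rank, ← finrank_eq_rank] at this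
  simp only [Cardinal.lift_natCast] at this
  exact_mod_cast this

theorem torsion_quotient_range_equiv_qmodz_pow_general
    {V : Type*} [AddCommGroup V] [Module ℚ V] (n ρ : ℕ)
    (f : (Fin n → ℤ) →+ V)
    (hrank : Module.finrank ℤ f.ker = ρ) :
    Nonempty ((AddCommGroup.torsion (V ⧸ f.range)) ≃+
      (Fin (n - ρ) → ℚ ⧸ AddSubgroup.zmultiples (1 : ℚ))) := by
  have : IsAddTorsionFree V := .of_module_rat V
  have : Module.Finite ℤ f.range := Module.Finite.range f.toIntLinearMap
  have : Module.Free ℤ f.range := Module.free_of_finite_type_torsion_free'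
  have hrange : finrank ℤ f.range = n - ρ := by
    have := f.finrank_range_add_finrank_ker
    rw [hrank, finrank_fin_fun] at this
    omega
  exact ⟨(finBasisOfFinrankEq ℤ f.range hrange).torsionQuotientAddEquiv⟩

/-- Let `V` be a `ℚ`-vector space, `n` a natural number, and
`f : ℤⁿ → V` an additive group homomorphism whose kernel is a free abelian
group of rank `ρ`.  Then the torsion subgroup of `V ⧸ f(ℤⁿ)` is isomorphic to
`(ℚ/ℤ)^{n-ρ}`. -/
theorem torsion_quotient_range_equiv_qmodz_pow
    {V : Type*} [AddCommGroup V] [Module ℚ V] (n ρ : ℕ)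
    (f : (Fin n → ℤ) →+ V)
    [Module.Free ℤ f.ker] [Module.Finite ℤ f.ker]
    (hrank : Module.finrank ℤ f.ker = ρ) :
    Nonempty ((AddCommGroup.torsion (V ⧸ f.range)) ≃+
      (Fin (n - ρ) → ℚ ⧸ AddSubgroup.zmultiples (1 : ℚ))) :=
  torsion_quotient_range_equiv_qmodz_pow_general n ρ f hrank
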